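/- arXiv:1101.5820 — 5 statements merged into one kernel-verified Lean document; each statement's English description precedes it below -/
import Mathlib

section
/- If the strict-order relation R = {(x,y) ∈ X² : x < y} of a partially ordered topological space X is open in X², then the collection 𝒮 of closed lower subsets of X is a closed subset of the space of closed subsets of X with the Fell topology. -/
open Set TopologicalSpace

/-- The Fell topology on the space of topologically closed subsets of `X`. -/
def fellTopology (X : Type*) [TopologicalSpace X] :
    TopologicalSpace {F : Set X // IsClosed F} :=
  TopologicalSpace.generateFrom
    ({W | ∃ U : Set X, IsOpen U ∧ W = {F : {F : Set X // IsClosed F} | (F.1 ∩ U).Nonempty}} ∪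
     {W | ∃ K : Set X, IsCompact K ∧ W = {F : {F : Set X // IsClosed F} | F.1 ∩ K = ∅}})

/-- `H` is a lower set with respect to the strict order: `x ∈ H` and `y < x` imply `y ∈ H`. -/
def IsLowerLt {X : Type*} [LT X] (H : Set X) : Prop :=
  ∀ ⦃x⦄, x ∈ H → ∀ ⦃y⦄, y < x → y ∈ H

/-! A closed set `F` fails to be a lower set exactly when some `y ∉ F` lies strictly below a
point of `F`, i.e. when `F` meets the open set `{z | y < z}` and misses the compact set `{y}`.
Both conditions are Fell-open, so the non-lower closed sets form a union of Fell-open sets. -/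

open Topology

section FellTopology

variable {X : Type*} [TopologicalSpace X]

theorem isOpen_fellTopology_setOf_inter_nonempty {U : Set X} (hU : IsOpen U) :
    IsOpen[fellTopology X] {F : {F : Set X // IsClosed F} | (F.1 ∩ U).Nonempty} :=
  GenerateOpen.basic _ (Or.inl ⟨U, hU, rfl⟩)

theorem isOpen_fellTopology_setOf_inter_eq_empty {K : Set X} (hK : IsCompact K) :
    IsOpen[fellTopology X] {F : {F : Set X // IsClosed F} | F.1 ∩ K = ∅} :=
  GenerateOpen.basic _ (Or.inr ⟨K, hK, rfl⟩)

theorem isOpen_fellTopology_setOf_notMem (y : X) :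
    IsOpen[fellTopology X] {F : {F : Set X // IsClosed F} | y ∉ F.1} := by
  simpa only [inter_singleton_eq_empty] using
    isOpen_fellTopology_setOf_inter_eq_empty (isCompact_singleton (x := y))

end FellTopology

theorem isOpen_setOf_gt_of_isOpen_setOf_lt {X : Type*} [TopologicalSpace X] [LT X]
    (hR : IsOpen {p : X × X | p.1 < p.2}) (y : X) : IsOpen {z : X | y < z} :=
  hR.preimage (Continuous.prodMk_right y)

theorem not_isLowerLt_iff {X : Type*} [LT X] {H : Set X} :
    ¬ IsLowerLt H ↔ ∃ y, (H ∩ {z | y < z}).Nonempty ∧ y ∉ H := by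
  simp only [IsLowerLt, not_forall, exists_prop, Set.Nonempty, mem_inter_iff, mem_ofPred_eq]
  constructor
  · rintro ⟨x, hx, y, hyx, hy⟩
    exact ⟨y, ⟨x, hx, hyx⟩, hy⟩
  · rintro ⟨y, ⟨x, hx, hyx⟩, hy⟩
    exact ⟨x, hx, y, hyx, hy⟩

/-- If the strict-order relation is open in `X²`, then the collection of closed lower
subsets of `X` is a closed subset of the space of closed subsets with the Fell topology. -/
theorem lowerSets_isClosed_in_fell (X : Type*) [TopologicalSpace X] [PartialOrder X]
    (hR : IsOpen {p : X × X | p.1 < p.2}) :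
    @IsClosed _ (fellTopology X) {F : {F : Set X // IsClosed F} | IsLowerLt F.1} := by
  let _ := fellTopology X
  have hcompl : {F : {F : Set X // IsClosed F} | IsLowerLt F.1}ᶜ =
      ⋃ y : X, {F | (F.1 ∩ {z | y < z}).Nonempty} ∩ {F | y ∉ F.1} := by
    ext F
    simp only [mem_compl_iff, mem_ofPred_eq, not_isLowerLt_iff, mem_iUnion, mem_inter_iff]
  rw [← isOpen_compl_iff, hcompl]
  exact isOpen_iUnion fun y =>
    (isOpen_fellTopology_setOf_inter_nonempty (isOpen_setOf_gt_of_isOpen_setOf_lt hR y)).inter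
      (isOpen_fellTopology_setOf_notMem y)
end

section
/- Suppose the strict-order relation of X is open in X² and every point x of X lies in the closure of its strict down-set {y : y < x}. Then the space 𝒮 of closed lower subsets of X, with the subspace topology induced from the Fell topology, is Hausdorff. -/
open Set TopologicalSpace

/-- The space `𝒮` of topologically closed lower subsets of `X`. -/
def SSpace (X : Type*) [TopologicalSpace X] [LT X] : Type _ :=
  {S : Set X // IsClosed S ∧ IsLowerLt S}

/-- The topology on `𝒮` generated by the sets `V_U = {S : S ∩ U ≠ ∅}` for `U` open and
`V^K = {S : S ∩ K = ∅}` for `K` compact. -/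
def STopology (X : Type*) [TopologicalSpace X] [LT X] : TopologicalSpace (SSpace X) :=
  TopologicalSpace.generateFrom
    ({W | ∃ U : Set X, IsOpen U ∧ W = {S : SSpace X | (S.1 ∩ U).Nonempty}} ∪
     {W | ∃ K : Set X, IsCompact K ∧ W = {S : SSpace X | S.1 ∩ K = ∅}})

/-
If `x ∈ S \ T`, then `Tᶜ` is a neighbourhood of `x`, so it contains some `y < x`.
Since `<` is open, `{a | y < a}` is an open neighbourhood of `x`. Every lower set meeting it
contains `y`, so the open sets "meets `{a | y < a}`" (containing `S`) and "misses `{y}`"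
(containing `T`) are disjoint.
-/

open scoped Topology

attribute [local instance] STopology

namespace SSpace

variable {X : Type*} [TopologicalSpace X] [LT X]

theorem isOpen_setOf_inter_nonempty {U : Set X} (hU : IsOpen U) :
    IsOpen {S : SSpace X | (S.1 ∩ U).Nonempty} :=
  GenerateOpen.basic _ (Or.inl ⟨U, hU, rfl⟩)

theorem isOpen_setOf_inter_eq_empty {K : Set X} (hK : IsCompact K) :
    IsOpen {S : SSpace X | S.1 ∩ K = ∅} :=
  GenerateOpen.basic _ (Or.inr ⟨K, hK, rfl⟩)

theorem mem_of_inter_setOf_lt_nonempty (S : SSpace X) {y : X}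
    (h : (S.1 ∩ {a | y < a}).Nonempty) : y ∈ S.1 :=
  let ⟨_, haS, hya⟩ := h
  S.2.2 haS hya

theorem disjoint_nhds_of_lt {S T : SSpace X} {x y : X} (hy : IsOpen {a | y < a}) (hyx : y < x)
    (hxS : x ∈ S.1) (hyT : y ∉ T.1) : Disjoint (𝓝 S) (𝓝 T) := by
  have hS : S ∈ {A : SSpace X | (A.1 ∩ {a | y < a}).Nonempty} := ⟨x, hxS, hyx⟩
  have hT : T ∈ {A : SSpace X | A.1 ∩ {y} = ∅} := Set.inter_singleton_eq_empty.2 hyT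
  refine Filter.disjoint_of_disjoint_of_mem ?_
    ((isOpen_setOf_inter_nonempty hy).mem_nhds hS)
    ((isOpen_setOf_inter_eq_empty isCompact_singleton).mem_nhds hT)
  exact Set.disjoint_left.2 fun A hA hA' =>
    Set.inter_singleton_eq_empty.1 hA' (A.mem_of_inter_setOf_lt_nonempty hA)

theorem disjoint_nhds_of_not_subset (hR : IsOpen {p : X × X | p.1 < p.2})
    (hsb : ∀ x : X, x ∈ closure {y | y < x}) {S T : SSpace X} (h : ¬ S.1 ⊆ T.1) :
    Disjoint (𝓝 S) (𝓝 T) := by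
  obtain ⟨x, hxS, hxT⟩ := Set.not_subset.1 h
  obtain ⟨y, hyT, hyx⟩ := mem_closure_iff.1 (hsb x) _ T.2.1.isOpen_compl hxT
  have hy : IsOpen {a | y < a} := hR.preimage (continuous_const.prodMk continuous_id)
  exact disjoint_nhds_of_lt hy hyx hxS hyT

end SSpace

/-- If the strict-order relation is open and every point lies in the closure of its strict
down-set, then the space of closed lower subsets of `X` with the topology generated by the
sets `V_U` and `V^K` is Hausdorff. -/
theorem sspace_t2 (X : Type*) [TopologicalSpace X] [PartialOrder X]
    (hR : IsOpen {p : X × X | p.1 < p.2})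
    (hsb : ∀ x : X, x ∈ closure {y | y < x}) :
    @T2Space (SSpace X) (STopology X) := by
  refine t2Space_iff_disjoint_nhds.2 fun S T hST => ?_
  by_cases hsub : S.1 ⊆ T.1
  · have hsup : ¬ T.1 ⊆ S.1 := fun h => hST (Subtype.ext (hsub.antisymm h))
    exact (SSpace.disjoint_nhds_of_not_subset hR hsb hsup).symm
  · exact SSpace.disjoint_nhds_of_not_subset hR hsb hsub
end

section
/- Under the assumptions that the strict-order relation is open and every point is in the closure of its strict down-set, if X₀ is a dense subset of X and S₁, S₂ are closed lower subsets of X with S₁ ∩ X₀ = S₂ ∩ X₀, then S₁ = S₂. -/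
open Set TopologicalSpace

section OpenStrictOrder

variable {X : Type*} [TopologicalSpace X] [LT X]

theorem isOpen_setOf_lt_of_isOpen_lt (hR : IsOpen {p : X × X | p.1 < p.2}) (x : X) :
    IsOpen {y | y < x} :=
  hR.preimage (continuous_id.prodMk continuous_const)

/-- Since `{y | y < x}` is open, density of `X₀` passes to it. -/
theorem mem_closure_setOf_lt_inter_of_dense (hR : IsOpen {p : X × X | p.1 < p.2})
    (hsb : ∀ x : X, x ∈ closure {y | y < x}) {X₀ : Set X} (hX₀ : Dense X₀) (x : X) :
    x ∈ closure ({y | y < x} ∩ X₀) :=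
  closure_minimal (hX₀.open_subset_closure_inter (isOpen_setOf_lt_of_isOpen_lt hR x))
    isClosed_closure (hsb x)

theorem IsLowerLt.subset_closure_inter_of_dense (hR : IsOpen {p : X × X | p.1 < p.2})
    (hsb : ∀ x : X, x ∈ closure {y | y < x}) {X₀ : Set X} (hX₀ : Dense X₀) {S : Set X}
    (hS : IsLowerLt S) : S ⊆ closure (S ∩ X₀) := fun x hx =>
  closure_mono (inter_subset_inter_left X₀ fun _ hy => hS hx hy)
    (mem_closure_setOf_lt_inter_of_dense hR hsb hX₀ x)

theorem IsLowerLt.subset_of_inter_subset_of_dense (hR : IsOpen {p : X × X | p.1 < p.2})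
    (hsb : ∀ x : X, x ∈ closure {y | y < x}) {X₀ : Set X} (hX₀ : Dense X₀) {S T : Set X}
    (hS : IsLowerLt S) (hT : IsClosed T) (h : S ∩ X₀ ⊆ T) : S ⊆ T :=
  (hS.subset_closure_inter_of_dense hR hsb hX₀).trans (closure_minimal h hT)

end OpenStrictOrder

/-- If the strict-order relation is open, every point lies in the closure of its strict
down-set, and `X₀` is dense, then closed lower sets agreeing on `X₀` are equal. -/
theorem closedLower_eq_of_dense_agree (X : Type*) [TopologicalSpace X] [PartialOrder X]
    (hR : IsOpen {p : X × X | p.1 < p.2})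
    (hsb : ∀ x : X, x ∈ closure {y | y < x})
    (X₀ : Set X) (hX₀ : Dense X₀)
    (S₁ S₂ : Set X)
    (h₁c : IsClosed S₁) (h₁l : IsLowerLt S₁)
    (h₂c : IsClosed S₂) (h₂l : IsLowerLt S₂)
    (h : S₁ ∩ X₀ = S₂ ∩ X₀) : S₁ = S₂ :=
  Subset.antisymm
    (h₁l.subset_of_inter_subset_of_dense hR hsb hX₀ h₂c (h ▸ inter_subset_left))
    (h₂l.subset_of_inter_subset_of_dense hR hsb hX₀ h₁c (h ▸ inter_subset_left))
end

section
/- If X is second-countable and satisfies that the strict-order relation is open and every point is in the closure of its strict down-set, then the space 𝒮 of closed lower subsets of X with the Fell-induced topology is second-countable, compact, Hausdorff, and hence metrizable. -/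
open Set TopologicalSpace

/-! An ultrafilter `𝒰` on `𝒮` converges to the set of points all of whose open neighbourhoods
are hit by `𝒰`-almost every `S`: this set is closed, it is lower because each `{b | y < b}` is
open, and `𝒰`-almost every `S` misses a compact `K` disjoint from it, since `K` is covered by
finitely many open sets each hit by `𝒰`-almost no `S`. So `𝒮` is compact.
Two distinct points of `𝒮` are already separated by sets `V_B`, `B` from a countable basis, and
`V^{d}`, `d` from a countable dense set. These countably many sets generate a Hausdorff topology
coarser than the compact topology of `𝒮`, hence equal to it; so `𝒮` is second countable and
Hausdorff, and metrizable by Urysohn. -/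

namespace SSpace

variable {X : Type*} [TopologicalSpace X] [LT X]

local instance : TopologicalSpace (SSpace X) := STopology X

-- `hitting U` and `missing K` are the subbasic sets `V_U` and `V^K`.
def hitting (U : Set X) : Set (SSpace X) := {S | (S.1 ∩ U).Nonempty}

def missing (K : Set X) : Set (SSpace X) := {S | S.1 ∩ K = ∅}

lemma missing_eq_compl_hitting (K : Set X) : missing K = (hitting K)ᶜ := by
  ext S
  simp [missing, hitting, not_nonempty_iff_eq_empty]

lemma hitting_mono {U V : Set X} (h : U ⊆ V) : hitting U ⊆ hitting (X := X) V :=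
  fun _ hS ↦ hS.mono (inter_subset_inter_right _ h)

lemma hitting_union (U V : Set X) : hitting (U ∪ V) = hitting U ∪ hitting V := by
  ext S
  simp [hitting, inter_union_distrib_left, union_nonempty]

lemma isOpen_hitting {U : Set X} (hU : IsOpen U) : IsOpen (hitting U) :=
  isOpen_generateFrom_of_mem (Or.inl ⟨U, hU, rfl⟩)

lemma isOpen_missing {K : Set X} (hK : IsCompact K) : IsOpen (missing K) :=
  isOpen_generateFrom_of_mem (Or.inr ⟨K, hK, rfl⟩)

def limitSet (𝒰 : Ultrafilter (SSpace X)) : Set X :=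
  {x | ∀ U, IsOpen U → x ∈ U → hitting U ∈ 𝒰}

lemma isClosed_limitSet (𝒰 : Ultrafilter (SSpace X)) : IsClosed (limitSet 𝒰) := by
  refine isOpen_compl_iff.1 (isOpen_iff_forall_mem_open.2 fun x hx ↦ ?_)
  simp only [limitSet, mem_compl_iff, mem_ofPred_eq, not_forall] at hx
  obtain ⟨U, hUo, hxU, hU⟩ := hx
  exact ⟨U, fun y hyU hy ↦ hU (hy U hUo hyU), hUo, hxU⟩

lemma isLowerLt_limitSet (hIoi : ∀ y : X, IsOpen {b | y < b}) (𝒰 : Ultrafilter (SSpace X)) :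
    IsLowerLt (limitSet 𝒰) := by
  intro x hx y hyx U hUo hyU
  refine Filter.mem_of_superset (hx _ (hIoi y) hyx) ?_
  rintro S ⟨b, hbS, hyb⟩
  exact ⟨y, S.2.2 hbS hyb, hyU⟩

lemma hitting_notMem_of_disjoint_limitSet {𝒰 : Ultrafilter (SSpace X)} {K : Set X}
    (hK : IsCompact K) (hdisj : Disjoint (limitSet 𝒰) K) : hitting K ∉ 𝒰 := by
  refine hK.induction_on (p := fun s ↦ hitting s ∉ 𝒰) ?_ ?_ ?_ ?_
  · simp [hitting]
  · exact fun s t hst ht hs ↦ ht (Filter.mem_of_superset hs (hitting_mono hst))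
  · intro s t hs ht
    rw [hitting_union, Ultrafilter.union_mem_iff]
    exact not_or_intro hs ht
  · intro x hxK
    have hx : x ∉ limitSet 𝒰 := disjoint_right.1 hdisj hxK
    simp only [limitSet, mem_ofPred_eq, not_forall] at hx
    obtain ⟨U, hUo, hxU, hU⟩ := hx
    exact ⟨U, mem_nhdsWithin_of_mem_nhds (hUo.mem_nhds hxU), hU⟩

theorem compactSpace (hIoi : ∀ y : X, IsOpen {b | y < b}) : CompactSpace (SSpace X) := by
  refine ⟨isCompact_iff_ultrafilter_le_nhds.2 fun 𝒰 _ ↦ ?_⟩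
  refine ⟨⟨limitSet 𝒰, isClosed_limitSet 𝒰, isLowerLt_limitSet hIoi 𝒰⟩, mem_univ _, ?_⟩
  refine (tendsto_nhds_generateFrom_iff (m := id)).2 fun W hW hmem ↦ ?_
  rcases hW with ⟨U, hUo, rfl⟩ | ⟨K, hK, rfl⟩
  · obtain ⟨x, hx, hxU⟩ := hmem
    exact hx U hUo hxU
  · change (missing K : Set (SSpace X)) ∈ 𝒰
    rw [missing_eq_compl_hitting, Ultrafilter.compl_mem_iff_notMem]
    exact hitting_notMem_of_disjoint_limitSet hK (disjoint_iff_inter_eq_empty.2 hmem)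

def hitMissFamily (𝓑 : Set (Set X)) (D : Set X) : Set (Set (SSpace X)) :=
  hitting '' 𝓑 ∪ (fun d ↦ missing {d}) '' D

lemma countable_hitMissFamily {𝓑 : Set (Set X)} {D : Set X} (h𝓑 : 𝓑.Countable)
    (hD : D.Countable) : (hitMissFamily 𝓑 D).Countable :=
  (h𝓑.image _).union (hD.image _)

lemma le_generateFrom_hitMissFamily {𝓑 : Set (Set X)} (h𝓑 : ∀ B ∈ 𝓑, IsOpen B) (D : Set X) :
    STopology X ≤ generateFrom (hitMissFamily 𝓑 D) := by
  refine le_generateFrom ?_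
  rintro W (⟨B, hB, rfl⟩ | ⟨d, -, rfl⟩)
  exacts [isOpen_hitting (h𝓑 B hB), isOpen_missing isCompact_singleton]

/-- If `x ∈ S \ T`, pick `z ∉ T` with `z < x`; openness of `<` gives neighbourhoods `A ∋ z`
and `B ∋ x` with `A < B`, and a point `d ∈ D ∩ A \ T`. Then `S` hits `B`, `T` misses `d`, and
any lower set hitting `B` contains `d`. -/
lemma exists_hitMissFamily_separating {𝓑 : Set (Set X)} (h𝓑 : IsTopologicalBasis 𝓑)
    {D : Set X} (hD : Dense D) (hR : IsOpen {p : X × X | p.1 < p.2})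
    (hsb : ∀ x : X, x ∈ closure {y | y < x}) {S T : SSpace X} {x : X} (hxS : x ∈ S.1)
    (hxT : x ∉ T.1) :
    ∃ u ∈ hitMissFamily 𝓑 D, ∃ v ∈ hitMissFamily 𝓑 D, S ∈ u ∧ T ∈ v ∧ Disjoint u v := by
  have hTc : IsOpen T.1ᶜ := T.2.1.isOpen_compl
  obtain ⟨z, hzT, hzx⟩ := mem_closure_iff.1 (hsb x) _ hTc hxT
  obtain ⟨A, B, hA, hB, hzA, hxB, hAB⟩ := isOpen_prod_iff.1 hR z x hzx
  obtain ⟨B', hB'𝓑, hxB', hB'B⟩ := h𝓑.exists_subset_of_mem_open hxB hB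
  obtain ⟨d, ⟨hdA, hdT⟩, hdD⟩ := hD.inter_open_nonempty _ (hA.inter hTc) ⟨z, hzA, hzT⟩
  refine ⟨_, Or.inl ⟨B', hB'𝓑, rfl⟩, _, Or.inr ⟨d, hdD, rfl⟩, ⟨x, hxS, hxB'⟩,
    by simpa [missing] using hdT, disjoint_left.2 ?_⟩
  rintro S' ⟨b, hbS', hbB'⟩ hS'd
  have hdb : d < b := hAB (mk_mem_prod hdA (hB'B hbB'))
  exact (eq_empty_iff_forall_notMem.1 hS'd) d ⟨S'.2.2 hbS' hdb, rfl⟩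

lemma t2Space_generateFrom_hitMissFamily {𝓑 : Set (Set X)} (h𝓑 : IsTopologicalBasis 𝓑)
    {D : Set X} (hD : Dense D) (hR : IsOpen {p : X × X | p.1 < p.2})
    (hsb : ∀ x : X, x ∈ closure {y | y < x}) :
    @T2Space (SSpace X) (generateFrom (hitMissFamily 𝓑 D)) := by
  let _ : TopologicalSpace (SSpace X) := generateFrom (hitMissFamily 𝓑 D)
  refine ⟨fun S T hST ↦ ?_⟩
  have hne : ¬(S.1 ⊆ T.1 ∧ T.1 ⊆ S.1) := fun h ↦ hST (Subtype.ext (h.1.antisymm h.2))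
  rcases not_and_or.1 hne with h | h <;> obtain ⟨x, hx₁, hx₂⟩ := not_subset.1 h
  · obtain ⟨u, hu, v, hv, hSu, hTv, huv⟩ :=
      exists_hitMissFamily_separating h𝓑 hD hR hsb hx₁ hx₂
    exact ⟨u, v, .basic u hu, .basic v hv, hSu, hTv, huv⟩
  · obtain ⟨u, hu, v, hv, hTu, hSv, huv⟩ :=
      exists_hitMissFamily_separating h𝓑 hD hR hsb hx₁ hx₂
    exact ⟨v, u, .basic v hv, .basic u hu, hSv, hTu, huv.symm⟩

end SSpace

lemma TopologicalSpace.eq_of_le_of_compactSpace_of_t2Space {α : Type*}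
    {t t' : TopologicalSpace α} [@CompactSpace α t] [@T2Space α t'] (h : t ≤ t') : t = t' := by
  obtain ⟨⟨⟨hinduced⟩, -⟩, -⟩ :=
    @Continuous.isClosedEmbedding α α t t' _ _ id (continuous_id_of_le h) Function.injective_id
  exact hinduced.trans (@induced_id _ t')

/-- If `X` is second-countable, the strict-order relation is open, and every point lies in
the closure of its strict down-set, then the space of closed lower subsets with the
topology generated by `V_U` and `V^K` is second-countable, compact, Hausdorff,
and hence metrizable. -/
theorem sspace_secondCountable_compact_t2_metrizable
    (X : Type*) [TopologicalSpace X] [SecondCountableTopology X] [PartialOrder X]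
    (hR : IsOpen {p : X × X | p.1 < p.2})
    (hsb : ∀ x : X, x ∈ closure {y | y < x}) :
    @SecondCountableTopology (SSpace X) (STopology X) ∧
    @CompactSpace (SSpace X) (STopology X) ∧
    @T2Space (SSpace X) (STopology X) ∧
    @MetrizableSpace (SSpace X) (STopology X) := by
  let _ : TopologicalSpace (SSpace X) := STopology X
  obtain ⟨D, hDc, hD⟩ := exists_countable_dense X
  have hcpt : CompactSpace (SSpace X) :=
    SSpace.compactSpace fun y ↦ hR.preimage (Continuous.prodMk_right y)
  have ht₀ := SSpace.t2Space_generateFrom_hitMissFamily (isBasis_countableBasis X) hD hR hsb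
  have heq : STopology X = generateFrom (SSpace.hitMissFamily (countableBasis X) D) :=
    TopologicalSpace.eq_of_le_of_compactSpace_of_t2Space
      (SSpace.le_generateFrom_hitMissFamily (fun _ ↦ isOpen_of_mem_countableBasis) D)
  have hsc : SecondCountableTopology (SSpace X) :=
    ⟨⟨_, SSpace.countable_hitMissFamily (countable_countableBasis X) hDc, heq⟩⟩
  have ht2 : @T2Space (SSpace X) (STopology X) := heq ▸ ht₀
  exact ⟨hsc, hcpt, ht2, metrizableSpace_of_t3_secondCountable _⟩
end

section
/- Under the assumptions that the strict-order relation is open and every point is in the closure of its strict down-set, a net (S_n) of closed lower subsets converges to S in the topology on 𝒮 if and only if S = liminf_n S_n = limsup_n S_n in the Kuratowski sense. -/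
open Set TopologicalSpace

/-- Kuratowski liminf of a net of sets: points whose every open neighborhood eventually
meets the net. -/
def netLiminf {X : Type*} [TopologicalSpace X] {D : Type*} [Preorder D]
    (Y : D → Set X) : Set X :=
  {x | ∀ U : Set X, IsOpen U → x ∈ U → ∃ m : D, ∀ n, m ≤ n → (Y n ∩ U).Nonempty}

/-- Kuratowski limsup of a net of sets: points whose every open neighborhood meets the net
cofinally often. -/
def netLimsup {X : Type*} [TopologicalSpace X] {D : Type*} [Preorder D]
    (Y : D → Set X) : Set X :=
  {x | ∀ U : Set X, IsOpen U → x ∈ U → ∀ m : D, ∃ n, m ≤ n ∧ (Y n ∩ U).Nonempty}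

/-! Convergence in `𝒮` splits into a hit condition (open sets meeting `S` eventually meet `Sₙ`),
which is exactly `S ⊆ liminf Sₙ`, and a miss condition (compact sets missing `S` eventually miss
`Sₙ`). By compactness, `limsup Sₙ ⊆ S` gives the miss condition. Conversely, if
`x ∈ limsup Sₙ \ S`, pick `y < x` outside the closed set `S`; all points near `x` lie above `y`,
so the lower sets `Sₙ` that come near `x` frequently contain `y`, contradicting the miss
condition for the compact set `{y}`. -/

open Filter Topology

section Kuratowski

variable {X : Type*} [TopologicalSpace X] {D : Type*} [Preorder D] [IsDirectedOrder D]
  [Nonempty D] {Y : D → Set X}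

theorem mem_netLiminf_iff {x : X} :
    x ∈ netLiminf Y ↔ ∀ U ∈ 𝓝 x, ∀ᶠ n in atTop, (Y n ∩ U).Nonempty := by
  rw [(nhds_basis_opens x).forall_iff fun U V hUV h ↦ h.mono fun n hn ↦ hn.mono <|
    inter_subset_inter_right _ hUV]
  simp only [eventually_atTop, netLiminf, mem_ofPred_eq, and_imp]
  exact forall_congr' fun U ↦ forall_comm

theorem mem_netLimsup_iff {x : X} :
    x ∈ netLimsup Y ↔ ∀ U ∈ 𝓝 x, ∃ᶠ n in atTop, (Y n ∩ U).Nonempty := by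
  rw [(nhds_basis_opens x).forall_iff fun U V hUV h ↦ h.mono fun n hn ↦ hn.mono <|
    inter_subset_inter_right _ hUV]
  simp only [frequently_atTop, netLimsup, mem_ofPred_eq, and_imp]
  exact forall_congr' fun U ↦ forall_comm

theorem netLiminf_subset_netLimsup : netLiminf Y ⊆ netLimsup Y := fun _ hx ↦
  mem_netLimsup_iff.2 fun U hU ↦ (mem_netLiminf_iff.1 hx U hU).frequently

theorem subset_netLiminf_iff {S : Set X} :
    S ⊆ netLiminf Y ↔ ∀ U, IsOpen U → (S ∩ U).Nonempty → ∀ᶠ n in atTop, (Y n ∩ U).Nonempty :=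
  ⟨fun h U hU ⟨_, hxS, hxU⟩ ↦ mem_netLiminf_iff.1 (h hxS) U (hU.mem_nhds hxU),
    fun h x hxS U hU hxU ↦ eventually_atTop.1 (h U hU ⟨x, hxS, hxU⟩)⟩

theorem eq_netLiminf_and_eq_netLimsup_iff {S : Set X} :
    S = netLiminf Y ∧ S = netLimsup Y ↔ S ⊆ netLiminf Y ∧ netLimsup Y ⊆ S :=
  ⟨fun ⟨hinf, hsup⟩ ↦ ⟨hinf.subset, hsup.symm.subset⟩, fun ⟨hinf, hsup⟩ ↦
    ⟨hinf.antisymm (netLiminf_subset_netLimsup.trans hsup),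
      (hinf.trans netLiminf_subset_netLimsup).antisymm hsup⟩⟩

theorem eventually_notMem_of_notMem_netLimsup {x : X} (hx : x ∉ netLimsup Y) :
    ∀ᶠ p in atTop ×ˢ 𝓝 x, p.2 ∉ Y p.1 := by
  obtain ⟨U, hU, hYU⟩ : ∃ U ∈ 𝓝 x, ∀ᶠ n in atTop, ¬(Y n ∩ U).Nonempty := by
    simpa [mem_netLimsup_iff, not_frequently] using hx
  exact (hYU.prod_mk hU).mono fun p ⟨hp, hpU⟩ hpY ↦ hp ⟨p.2, hpY, hpU⟩

theorem eventually_inter_eq_empty_of_netLimsup {K : Set X} (hK : IsCompact K)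
    (hKY : netLimsup Y ∩ K = ∅) : ∀ᶠ n in atTop, Y n ∩ K = ∅ := by
  have hprod : ∀ᶠ p in atTop ×ˢ 𝓝ˢ K, p.2 ∉ Y p.1 :=
    hK.mem_prod_nhdsSet_of_forall fun x hxK ↦
      eventually_notMem_of_notMem_netLimsup fun hx ↦ hKY.subset ⟨hx, hxK⟩
  refine hprod.curry.mono fun n hn ↦ ?_
  have hn : ∀ x ∈ K, x ∉ Y n := eventually_principal.1 (hn.filter_mono principal_le_nhdsSet)
  exact eq_empty_of_forall_notMem fun x ⟨hxY, hxK⟩ ↦ hn x hxK hxY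

theorem netLimsup_subset_iff [Preorder X] (hIoi : ∀ y : X, IsOpen (Ioi y))
    (hIio : ∀ x : X, x ∈ closure (Iio x)) (hY : ∀ n, IsLowerLt (Y n)) {S : Set X}
    (hS : IsClosed S) :
    netLimsup Y ⊆ S ↔ ∀ K, IsCompact K → S ∩ K = ∅ → ∀ᶠ n in atTop, Y n ∩ K = ∅ := by
  refine ⟨fun h K hK hSK ↦ eventually_inter_eq_empty_of_netLimsup hK <|
    subset_eq_empty (inter_subset_inter_left K h) hSK, fun h x hx ↦ ?_⟩
  by_contra hxS
  obtain ⟨y, hyS, hyx⟩ := mem_closure_iff.1 (hIio x) _ hS.isOpen_compl hxS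
  have hyY : ∀ᶠ n in atTop, y ∉ Y n := (h {y} isCompact_singleton
    (inter_singleton_eq_empty.2 hyS)).mono fun n ↦ inter_singleton_eq_empty.1
  obtain ⟨n, ⟨z, hzY, hyz⟩, hyYn⟩ :=
    ((mem_netLimsup_iff.1 hx _ ((hIoi y).mem_nhds hyx)).and_eventually hyY).exists
  exact hyYn (hY n hzY hyz)

end Kuratowski

theorem tendsto_sspace_iff {X ι : Type*} [TopologicalSpace X] [LT X] {l : Filter ι}
    {Sn : ι → SSpace X} {S : SSpace X} :
    Tendsto Sn l (@nhds _ (STopology X) S) ↔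
      (∀ U, IsOpen U → (S.1 ∩ U).Nonempty → ∀ᶠ n in l, ((Sn n).1 ∩ U).Nonempty) ∧
      ∀ K, IsCompact K → S.1 ∩ K = ∅ → ∀ᶠ n in l, (Sn n).1 ∩ K = ∅ := by
  unfold STopology
  rw [tendsto_nhds_generateFrom_iff]
  refine ⟨fun h ↦ ⟨fun U hU ↦ h _ (.inl ⟨U, hU, rfl⟩), fun K hK ↦ h _ (.inr ⟨K, hK, rfl⟩)⟩, ?_⟩
  rintro ⟨hit, miss⟩ W (⟨U, hU, rfl⟩ | ⟨K, hK, rfl⟩)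
  exacts [hit U hU, miss K hK]

/-- Under the standing assumptions, a net of closed lower sets converges to `S` in the
topology on `𝒮` if and only if `S` is its Kuratowski limit. -/
theorem sspace_tendsto_iff_kuratowski
    (X : Type*) [TopologicalSpace X] [PartialOrder X]
    {D : Type*} [Preorder D] [IsDirected D (· ≤ ·)] [Nonempty D]
    (hR : IsOpen {p : X × X | p.1 < p.2})
    (hsb : ∀ x : X, x ∈ closure {y | y < x})
    (Sn : D → SSpace X) (S : SSpace X) :
    Filter.Tendsto Sn Filter.atTop (@nhds _ (STopology X) S) ↔
      (S.1 = netLiminf (fun n => (Sn n).1) ∧ S.1 = netLimsup (fun n => (Sn n).1)) := by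
  have hIoi (y : X) : IsOpen (Ioi y) := hR.preimage (continuous_const.prodMk continuous_id)
  rw [tendsto_sspace_iff, eq_netLiminf_and_eq_netLimsup_iff, subset_netLiminf_iff,
    netLimsup_subset_iff hIoi hsb (fun n ↦ (Sn n).2.2) S.2.1]
end
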